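/- Let μ and ν be Borel probability measures on ℝ and let z ∈ ℂ⁺. Then G_ν(z) ≠ 0, the point 1/G_ν(z) lies in ℂ⁺, and ∫_{ℝ×ℝ} 1/((z−y)(1−x·G_ν(z))) d(μ⊗ν)(x,y) = G_μ(1/G_ν(z)). (This is the Cauchy-transform computation showing that the sum of two monotonically independent self-adjoint operators with distributions μ and ν has Cauchy transform G_μ ∘ F_ν, the additive monotone convolution.) -/

import Mathlib

open MeasureTheory

/-- The Cauchy transform `G_ρ(z) = ∫ 1/(z−t) dρ(t)` of a measure on `ℝ`. -/
noncomputable def cauchyTransform (ρ : Measure ℝ) (z : ℂ) : ℂ := ∫ t, (z - (t : ℂ))⁻¹ ∂ρ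

/-
Writing `G = G_ν(z)`, the integrand factors as `G⁻¹ (G⁻¹ − x)⁻¹ · (z − y)⁻¹`, so by Fubini the
integral is `G⁻¹ G_μ(G⁻¹) · G_ν(z) = G_μ(G⁻¹)`. That `G` is nonzero with `G⁻¹ ∈ ℂ⁺` follows from
`Im (z − t)⁻¹ = −Im z / |z − t|² < 0` for every real `t`.
-/

lemma sub_ofReal_ne_zero {w : ℂ} (hw : w.im ≠ 0) (t : ℝ) : w - (t : ℂ) ≠ 0 :=
  fun h => hw (by simpa using congrArg Complex.im h)

lemma integrable_inv_sub_ofReal (ρ : Measure ℝ) [IsFiniteMeasure ρ] {w : ℂ} (hw : w.im ≠ 0) :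
    Integrable (fun t : ℝ => (w - (t : ℂ))⁻¹) ρ := by
  have hcont : Continuous fun t : ℝ => (w - (t : ℂ))⁻¹ :=
    (continuous_const.sub Complex.continuous_ofReal).inv₀ (sub_ofReal_ne_zero hw)
  refine (integrable_const |w.im|⁻¹).mono' hcont.aestronglyMeasurable (.of_forall fun t => ?_)
  rw [norm_inv]
  refine inv_anti₀ (abs_pos.mpr hw) ?_
  calc |w.im| = |(w - (t : ℂ)).im| := by simp
    _ ≤ ‖w - (t : ℂ)‖ := Complex.abs_im_le_norm _

lemma im_inv_sub_ofReal (w : ℂ) (t : ℝ) :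
    ((w - (t : ℂ))⁻¹).im = -(w.im / Complex.normSq (w - (t : ℂ))) := by
  simp [Complex.inv_im, neg_div]

lemma cauchyTransform_im_neg (ρ : Measure ℝ) [IsFiniteMeasure ρ] [NeZero ρ] {w : ℂ}
    (hw : 0 < w.im) : (cauchyTransform ρ w).im < 0 := by
  have hint := integrable_inv_sub_ofReal ρ hw.ne'
  have hpos (t : ℝ) : 0 < w.im / Complex.normSq (w - (t : ℂ)) :=
    div_pos hw (Complex.normSq_pos.mpr (sub_ofReal_ne_zero hw.ne' t))
  have hint_im : Integrable (fun t : ℝ => w.im / Complex.normSq (w - (t : ℂ))) ρ :=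
    hint.im.neg.congr (.of_forall fun t => by simp [neg_div])
  have him : (cauchyTransform ρ w).im = ∫ t, ((w - (t : ℂ))⁻¹).im ∂ρ := (integral_im hint).symm
  rw [him]
  simp only [im_inv_sub_ofReal, integral_neg, neg_lt_zero]
  have hsupp : Function.support (fun t : ℝ => w.im / Complex.normSq (w - (t : ℂ))) = .univ :=
    Set.eq_univ_of_forall fun t => (hpos t).ne'
  rw [integral_pos_iff_support_of_nonneg (fun t => (hpos t).le) hint_im, hsupp]
  simpa using NeZero.ne ρ

lemma cauchyTransform_ne_zero (ρ : Measure ℝ) [IsFiniteMeasure ρ] [NeZero ρ] {w : ℂ}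
    (hw : 0 < w.im) : cauchyTransform ρ w ≠ 0 := fun h => by
  simpa [h] using cauchyTransform_im_neg ρ hw

lemma im_inv_cauchyTransform_pos (ρ : Measure ℝ) [IsFiniteMeasure ρ] [NeZero ρ] {w : ℂ}
    (hw : 0 < w.im) : 0 < ((cauchyTransform ρ w)⁻¹).im := by
  rw [Complex.inv_im, neg_div, neg_pos]
  exact div_neg_of_neg_of_pos (cauchyTransform_im_neg ρ hw)
    (Complex.normSq_pos.mpr (cauchyTransform_ne_zero ρ hw))

lemma integral_prod_inv_mul_one_sub (μ ν : Measure ℝ) [SFinite μ] [SFinite ν] (z : ℂ)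
    {w : ℂ} (hw : w ≠ 0) :
    ∫ p : ℝ × ℝ, ((z - (p.2 : ℂ)) * (1 - (p.1 : ℂ) * w))⁻¹ ∂(μ.prod ν)
      = w⁻¹ * cauchyTransform μ w⁻¹ * cauchyTransform ν z := by
  have hfactor (x y : ℝ) :
      ((z - (y : ℂ)) * (1 - (x : ℂ) * w))⁻¹ = w⁻¹ * ((w⁻¹ - (x : ℂ))⁻¹ * (z - (y : ℂ))⁻¹) := by
    rw [show 1 - (x : ℂ) * w = w * (w⁻¹ - x) by field_simp, mul_inv, mul_inv]
    ring
  simp_rw [hfactor]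
  rw [integral_const_mul, integral_prod_mul (fun x : ℝ => (w⁻¹ - (x : ℂ))⁻¹) (fun y : ℝ => (z - (y : ℂ))⁻¹), mul_assoc]
  rfl

/-- For `z` in the upper half-plane, `G_ν(z) ≠ 0`, `1/G_ν(z)` lies in the upper half-plane, and
`∫ 1/((z−y)(1−x·G_ν(z))) d(μ⊗ν)(x,y) = G_μ(1/G_ν(z))`: the Cauchy transform of the sum of two
monotonically independent self-adjoint operators is `G_μ ∘ F_ν`. -/
theorem monotone_additive_cauchy_transform
    (μ ν : Measure ℝ) [IsProbabilityMeasure μ] [IsProbabilityMeasure ν]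
    (z : ℂ) (hz : 0 < z.im) :
    cauchyTransform ν z ≠ 0 ∧
    0 < ((cauchyTransform ν z)⁻¹).im ∧
    ∫ p : ℝ × ℝ, ((z - (p.2 : ℂ)) * (1 - (p.1 : ℂ) * cauchyTransform ν z))⁻¹ ∂(μ.prod ν)
      = cauchyTransform μ ((cauchyTransform ν z)⁻¹) := by
  have hG := cauchyTransform_ne_zero ν hz
  refine ⟨hG, im_inv_cauchyTransform_pos ν hz, ?_⟩
  rw [integral_prod_inv_mul_one_sub μ ν z hG]
  field_simp
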